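/- arXiv:1407.7430 — 9 statements merged into one kernel-verified Lean document; each statement's English description precedes it below -/
import Mathlib

section
/- Let G be a graph with n vertices, m edges, adjacency eigenvalues λ₁ ≥ ... ≥ λₙ, energy E = Σ|λᵢ|, and t = min over i of |λᵢ|. Then E ≥ (2m + n·λ₁·t)/(λ₁ + t), provided λ₁ + t > 0. -/
/-!
Every eigenvalue satisfies `t ≤ |λ| ≤ λ₁`; the upper bound holds because the adjacency matrix
is entrywise nonnegative, so `|vᵀAv| ≤ |v|ᵀA|v| ≤ λ₁` for a unit eigenvector `v`.
Hence `(λ₁ - |λ|)(|λ| - t) ≥ 0`, that is `λ² + λ₁t ≤ (λ₁ + t)|λ|`, and summing over the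
spectrum with `∑ λ² = tr A² = 2m` gives the bound.
-/
open Matrix Finset
open scoped MatrixOrder

lemma sum_sq_add_card_mul_le_mul_sum_abs {ι : Type*} [Fintype ι] {a : ι → ℝ} {t L : ℝ}
    (ht : ∀ i, t ≤ |a i|) (hL : ∀ i, |a i| ≤ L) :
    ∑ i, a i ^ 2 + Fintype.card ι * L * t ≤ (L + t) * ∑ i, |a i| := by
  have hterm (i : ι) : a i ^ 2 + L * t ≤ (L + t) * |a i| := by
    nlinarith [mul_nonneg (sub_nonneg.mpr (hL i)) (sub_nonneg.mpr (ht i)), sq_abs (a i)]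
  calc ∑ i, a i ^ 2 + Fintype.card ι * L * t = ∑ i, (a i ^ 2 + L * t) := by
        rw [sum_add_distrib, sum_const, card_univ, nsmul_eq_mul, mul_assoc]
    _ ≤ ∑ i, (L + t) * |a i| := sum_le_sum fun i _ ↦ hterm i
    _ = (L + t) * ∑ i, |a i| := (mul_sum _ _ _).symm

namespace Matrix

variable {n : Type*} [Fintype n]

lemma abs_dotProduct_mulVec_le_of_nonneg {A : Matrix n n ℝ} (hA : ∀ i j, 0 ≤ A i j)
    (x : n → ℝ) : |x ⬝ᵥ (A *ᵥ x)| ≤ |x| ⬝ᵥ (A *ᵥ |x|) := by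
  simp only [dotProduct, mulVec, mul_sum, Pi.abs_apply]
  refine (abs_sum_le_sum_abs _ _).trans <| sum_le_sum fun i _ ↦
    (abs_sum_le_sum_abs _ _).trans <| le_of_eq <| sum_congr rfl fun j _ ↦ ?_
  rw [abs_mul, abs_mul, abs_of_nonneg (hA i j)]

variable [DecidableEq n]

lemma IsHermitian.trace_mul_self {𝕜 : Type*} [RCLike 𝕜] {A : Matrix n n 𝕜}
    (hA : A.IsHermitian) : (A * A).trace = ∑ i, (hA.eigenvalues i ^ 2 : 𝕜) := by
  conv_lhs => rw [hA.spectral_theorem, ← map_mul, Unitary.conjStarAlgAut_apply, trace_mul_cycle,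
    Unitary.coe_star_mul_self, one_mul, diagonal_mul_diagonal, trace_diagonal]
  simp [sq]

lemma IsHermitian.dotProduct_mulVec_le {A : Matrix n n ℝ} (hA : A.IsHermitian) {L : ℝ}
    (hL : ∀ i, hA.eigenvalues i ≤ L) (x : n → ℝ) : x ⬝ᵥ (A *ᵥ x) ≤ L * (x ⬝ᵥ x) := by
  have hle : A ≤ algebraMap ℝ (Matrix n n ℝ) L := by
    refine le_algebraMap_of_spectrum_le ?_ hA
    rw [hA.spectrum_real_eq_range_eigenvalues]
    rintro _ ⟨i, rfl⟩
    exact hL i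
  have := (le_iff.mp hle).dotProduct_mulVec_nonneg x
  simpa [Algebra.algebraMap_eq_smul_one, sub_mulVec, dotProduct_sub, smul_mulVec] using this

lemma IsHermitian.abs_eigenvalues_le_of_nonneg {A : Matrix n n ℝ} (hA : A.IsHermitian)
    (hA₀ : ∀ i j, 0 ≤ A i j) {L : ℝ} (hL : ∀ i, hA.eigenvalues i ≤ L) (i : n) :
    |hA.eigenvalues i| ≤ L := by
  set v : n → ℝ := ⇑(hA.eigenvectorBasis i)
  have hv : |v| ⬝ᵥ |v| = 1 := by
    have := real_inner_self_eq_norm_sq (hA.eigenvectorBasis i)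
    rw [hA.eigenvectorBasis.orthonormal.1 i, EuclideanSpace.inner_eq_star_dotProduct] at this
    simpa [dotProduct, v] using this
  calc |hA.eigenvalues i| = |v ⬝ᵥ (A *ᵥ v)| := by simp [hA.eigenvalues_eq i, v]
    _ ≤ |v| ⬝ᵥ (A *ᵥ |v|) := abs_dotProduct_mulVec_le_of_nonneg hA₀ v
    _ ≤ L * (|v| ⬝ᵥ |v|) := hA.dotProduct_mulVec_le hL |v|
    _ = L := by rw [hv, mul_one]

end Matrix

namespace SimpleGraph

variable {V : Type*} (G : SimpleGraph V) [DecidableRel G.Adj]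

lemma adjMatrix_nonneg {α : Type*} [Zero α] [One α] [Preorder α] [ZeroLEOneClass α] (i j : V) :
    0 ≤ G.adjMatrix α i j := by
  rw [adjMatrix_apply]
  split_ifs
  exacts [zero_le_one, le_rfl]

lemma trace_adjMatrix_mul_self {α : Type*} [NonAssocSemiring α] [Fintype V] [DecidableEq V] :
    (G.adjMatrix α * G.adjMatrix α).trace = 2 * #G.edgeFinset := by
  simp only [Matrix.trace, Matrix.diag, adjMatrix_mul_self_apply_self]
  rw [← Nat.cast_sum, sum_degrees_eq_twice_card_edges, Nat.cast_mul, Nat.cast_ofNat]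

end SimpleGraph

theorem energy_lower_bound_main_general {V : Type*} [Fintype V] [DecidableEq V]
    (G : SimpleGraph V) [DecidableRel G.Adj]
    (hA : (G.adjMatrix ℝ).IsHermitian)
    (hpos : (⨆ i, hA.eigenvalues i) + (⨅ i, |hA.eigenvalues i|) > 0) :
    (∑ i, |hA.eigenvalues i|) ≥
      (2 * G.edgeFinset.card +
        (Fintype.card V : ℝ) * (⨆ i, hA.eigenvalues i) * (⨅ i, |hA.eigenvalues i|)) /
        ((⨆ i, hA.eigenvalues i) + (⨅ i, |hA.eigenvalues i|)) := by
  have ht (i : V) : ⨅ j, |hA.eigenvalues j| ≤ |hA.eigenvalues i| :=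
    ciInf_le (Set.finite_range _).bddBelow i
  have hL : ∀ i, |hA.eigenvalues i| ≤ ⨆ j, hA.eigenvalues j :=
    hA.abs_eigenvalues_le_of_nonneg G.adjMatrix_nonneg
      fun i ↦ le_ciSup (Set.finite_range _).bddAbove i
  have hsq : ∑ i, hA.eigenvalues i ^ 2 = 2 * (#G.edgeFinset : ℝ) := by
    simpa [G.trace_adjMatrix_mul_self] using hA.trace_mul_self.symm
  rw [ge_iff_le, div_le_iff₀ hpos, ← hsq]
  linarith [sum_sq_add_card_mul_le_mul_sum_abs ht hL]

theorem energy_lower_bound_main {V : Type*} [Fintype V] [DecidableEq V] [Nonempty V]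
    (G : SimpleGraph V) [DecidableRel G.Adj]
    (hA : (G.adjMatrix ℝ).IsHermitian)
    (hpos : (⨆ i, hA.eigenvalues i) + (⨅ i, |hA.eigenvalues i|) > 0) :
    (∑ i, |hA.eigenvalues i|) ≥
      (2 * G.edgeFinset.card +
        (Fintype.card V : ℝ) * (⨆ i, hA.eigenvalues i) * (⨅ i, |hA.eigenvalues i|)) /
        ((⨆ i, hA.eigenvalues i) + (⨅ i, |hA.eigenvalues i|)) :=
  energy_lower_bound_main_general G hA hpos
end

section
/- Let G be a triangle-free graph with m edges and largest adjacency eigenvalue λ₁. Then λ₁ ≤ √m. -/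
/-!
If `A v = μ v`, then `A² v = μ² v`, so by Gershgorin `μ²` is at most the largest row sum of `A²`.
The row sum of `A²` at `u` is `∑_{w ~ u} deg w`. In a triangle-free graph the neighbours of `u` are
pairwise non-adjacent, so their sets of incident edges are disjoint and this sum counts distinct
edges: it is at most `m`. Hence `λ₁² ≤ m`.
-/

open Finset Matrix Module.End

theorem Matrix.norm_le_of_hasEigenvalue_of_forall_sum_norm_le {K n : Type*} [NormedField K]
    [Fintype n] [DecidableEq n] {A : Matrix n n K} {μ : K} {c : ℝ}
    (hμ : HasEigenvalue (toLin' A) μ) (hA : ∀ i, ∑ j, ‖A i j‖ ≤ c) : ‖μ‖ ≤ c := by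
  obtain ⟨k, hk⟩ := eigenvalue_mem_ball hμ
  rw [mem_closedBall_iff_norm] at hk
  calc ‖μ‖ ≤ ‖A k k‖ + ‖μ - A k k‖ := norm_le_norm_add_norm_sub' μ (A k k)
    _ ≤ ‖A k k‖ + ∑ j ∈ univ.erase k, ‖A k j‖ := by gcongr
    _ = ∑ j, ‖A k j‖ := add_sum_erase _ (fun j => ‖A k j‖) (mem_univ k)
    _ ≤ c := hA k

namespace SimpleGraph

variable {V : Type*} [Fintype V] [DecidableEq V] {G : SimpleGraph V} [DecidableRel G.Adj]

theorem CliqueFree.sum_degree_neighborFinset_le_card_edgeFinset (htf : G.CliqueFree 3) (u : V) :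
    ∑ w ∈ G.neighborFinset u, G.degree w ≤ #G.edgeFinset := by
  have hdisj : (G.neighborFinset u : Set V).PairwiseDisjoint (fun w => G.incidenceFinset w) := by
    intro w hw w' hw' hne
    rw [Function.onFun, ← disjoint_coe, coe_incidenceFinset, coe_incidenceFinset,
      Set.disjoint_iff_inter_eq_empty]
    refine G.incidenceSet_inter_incidenceSet_of_not_adj (fun hadj => htf {u, w, w'} ?_) hne
    rw [mem_coe, mem_neighborFinset] at hw hw'
    exact is3Clique_triple_iff.2 ⟨hw, hw', hadj⟩
  calc ∑ w ∈ G.neighborFinset u, G.degree w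
      = ∑ w ∈ G.neighborFinset u, #(G.incidenceFinset w) := by
        simp only [card_incidenceFinset_eq_degree]
    _ = #((G.neighborFinset u).biUnion fun w => G.incidenceFinset w) := (card_biUnion hdisj).symm
    _ ≤ #G.edgeFinset := card_le_card (biUnion_subset.2 fun w _ => G.incidenceFinset_subset w)

theorem adjMatrix_sq_apply {α : Type*} [Semiring α] (i j : V) :
    (G.adjMatrix α ^ 2) i j = ∑ w ∈ G.neighborFinset i, G.adjMatrix α w j := by
  rw [sq, adjMatrix_mul_apply]

theorem sum_adjMatrix_sq_apply {α : Type*} [Semiring α] (i : V) :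
    ∑ j, (G.adjMatrix α ^ 2) i j = ∑ w ∈ G.neighborFinset i, (G.degree w : α) := by
  simp only [adjMatrix_sq_apply]
  rw [sum_comm]
  refine sum_congr rfl fun w _ => ?_
  simp [adjMatrix_apply, ← card_neighborFinset_eq_degree, neighborFinset_eq_filter]

theorem CliqueFree.sum_norm_adjMatrix_sq_apply_le (htf : G.CliqueFree 3) (i : V) :
    ∑ j, ‖(G.adjMatrix ℝ ^ 2) i j‖ ≤ #G.edgeFinset := by
  have hnonneg : ∀ j, 0 ≤ (G.adjMatrix ℝ ^ 2) i j := fun j => by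
    rw [adjMatrix_sq_apply]
    exact sum_nonneg fun w _ => by rw [adjMatrix_apply]; split_ifs <;> norm_num
  simp only [Real.norm_of_nonneg (hnonneg _), sum_adjMatrix_sq_apply]
  exact_mod_cast htf.sum_degree_neighborFinset_le_card_edgeFinset i

end SimpleGraph

theorem nosal_inequality {V : Type*} [Fintype V] [DecidableEq V] [Nonempty V]
    (G : SimpleGraph V) [DecidableRel G.Adj]
    (hA : (G.adjMatrix ℝ).IsHermitian)
    (htf : G.CliqueFree 3) :
    (⨆ i, hA.eigenvalues i) ≤ Real.sqrt G.edgeFinset.card := by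
  refine ciSup_le fun i => Real.le_sqrt_of_sq_le ?_
  have hμ : HasEigenvalue (toLin' (G.adjMatrix ℝ)) (hA.eigenvalues i) := by
    rw [hasEigenvalue_iff_mem_spectrum, spectrum_toLin']
    exact hA.eigenvalues_mem_spectrum_real i
  have hμsq : HasEigenvalue (toLin' (G.adjMatrix ℝ ^ 2)) (hA.eigenvalues i ^ 2) := by
    simpa only [toLin'_pow] using hμ.pow 2
  simpa only [Real.norm_eq_abs, abs_pow, sq_abs] using
    norm_le_of_hasEigenvalue_of_forall_sum_norm_le hμsq htf.sum_norm_adjMatrix_sq_apply_le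
end

section
/- Let G be a graph with n vertices and m edges. Then the energy E of G satisfies E ≤ √(2mn). -/
theorem mcclelland_upper_bound {V : Type*} [Fintype V] [DecidableEq V]
    (G : SimpleGraph V) [DecidableRel G.Adj]
    (hA : (G.adjMatrix ℝ).IsHermitian) :
    (∑ i, |hA.eigenvalues i|) ≤
      Real.sqrt (2 * G.edgeFinset.card * Fintype.card V) := by
  set A := G.adjMatrix ℝ with hAdef
  -- trace of A*A equals 2m
  have htr : Matrix.trace (A * A) = (2 * G.edgeFinset.card : ℝ) := by
    have : Matrix.trace (A * A) = ∑ i : V, (G.degree i : ℝ) := by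
      simp only [Matrix.trace, Matrix.diag, hAdef]
      refine Finset.sum_congr rfl fun x _ => ?_
      rw [SimpleGraph.adjMatrix_mul_self_apply_self]
    rw [this]
    rw [← Nat.cast_sum]
    rw [G.sum_degrees_eq_twice_card_edges]
    push_cast
    ring
  -- trace of A*A equals sum of squares of eigenvalues
  have hsq : Matrix.trace (A * A) = ∑ i, hA.eigenvalues i ^ 2 := by
    set U : Matrix V V ℝ := (hA.eigenvectorUnitary : Matrix V V ℝ) with hU
    set D : Matrix V V ℝ := Matrix.diagonal (RCLike.ofReal ∘ hA.eigenvalues) with hD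
    have hspec : A = U * D * star U := hA.spectral_theorem
    have hUU : star U * U = 1 := hA.eigenvectorUnitary.2.1
    have hm : A * A = U * (D * D) * star U := by
      rw [hspec]
      have h1 : U * D * star U * (U * D * star U)
          = U * D * (star U * U) * (D * star U) := by noncomm_ring
      rw [h1, hUU, Matrix.mul_one]
      noncomm_ring
    calc Matrix.trace (A * A)
        = Matrix.trace (U * (D * D) * star U) := by rw [hm]
      _ = Matrix.trace (star U * U * (D * D)) := by
          rw [Matrix.trace_mul_cycle, Matrix.mul_assoc]
      _ = Matrix.trace (D * D) := by rw [hUU, Matrix.one_mul]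
      _ = ∑ i, hA.eigenvalues i ^ 2 := by
          rw [hD, Matrix.diagonal_mul_diagonal, Matrix.trace_diagonal]
          simp [sq]
  have key : ∑ i, hA.eigenvalues i ^ 2 = (2 * G.edgeFinset.card : ℝ) := by
    rw [← hsq, htr]
  -- Cauchy-Schwarz
  have hcs : (∑ i, |hA.eigenvalues i|) ^ 2 ≤
      (Fintype.card V : ℝ) * (2 * G.edgeFinset.card : ℝ) := by
    have := sq_sum_le_card_mul_sum_sq (s := Finset.univ)
      (f := fun i => |hA.eigenvalues i|)
    simp only [sq_abs] at this
    calc (∑ i, |hA.eigenvalues i|) ^ 2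
        ≤ (Finset.univ.card : ℝ) * ∑ i, hA.eigenvalues i ^ 2 := this
      _ = (Fintype.card V : ℝ) * (2 * G.edgeFinset.card : ℝ) := by
          rw [key, Finset.card_univ]
  have hnn : (0:ℝ) ≤ ∑ i, |hA.eigenvalues i| :=
    Finset.sum_nonneg fun i _ => abs_nonneg _
  rw [show (2 * (G.edgeFinset.card : ℝ) * Fintype.card V)
      = (Fintype.card V : ℝ) * (2 * G.edgeFinset.card : ℝ) by ring]
  rw [Real.le_sqrt hnn]
  exact hcs
  positivity
end

section
/- Let G be a graph with n vertices, m edges, and adjacency matrix A with determinant |A|. Then E ≥ √(2m + n(n-1)·|det A|^{2/n}). -/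
open Finset Matrix

theorem mcclelland_lower_bound {V : Type*} [Fintype V] [DecidableEq V] [Nonempty V]
    (G : SimpleGraph V) [DecidableRel G.Adj]
    (hA : (G.adjMatrix ℝ).IsHermitian) :
    (∑ i, |hA.eigenvalues i|) ≥
      Real.sqrt (2 * G.edgeFinset.card +
        (Fintype.card V : ℝ) * ((Fintype.card V : ℝ) - 1) *
          |(G.adjMatrix ℝ).det| ^ ((2 : ℝ) / (Fintype.card V : ℝ))) := by
  classical
  set A := G.adjMatrix ℝ with hAdef
  set lam := hA.eigenvalues with hlam
  set a : V → ℝ := fun i => |lam i| with hadef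
  have ha : ∀ i, 0 ≤ a i := fun i => abs_nonneg _
  have hn : 0 < Fintype.card V := Fintype.card_pos
  -- trace of A^2 equals sum of squares of eigenvalues
  have htr : (A * A).trace = ∑ i, lam i ^ 2 := by
    set U := (hA.eigenvectorUnitary : Matrix V V ℝ) with hU
    set D := Matrix.diagonal ((RCLike.ofReal ∘ hA.eigenvalues : V → ℝ)) with hD
    have hU1 : star U * U = 1 := (Unitary.mem_iff.mp hA.eigenvectorUnitary.2).1
    have hsp : A = U * D * star U := hA.spectral_theorem
    have hAA : A * A = U * (D * (D * star U)) := by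
      conv_lhs => rw [hsp]
      simp only [Matrix.mul_assoc]
      rw [← Matrix.mul_assoc (star U) U, hU1, Matrix.one_mul]
    rw [hAA, Matrix.trace_mul_comm, Matrix.mul_assoc, Matrix.mul_assoc, hU1,
      Matrix.mul_one, hD]
    simp [Matrix.diagonal_mul_diagonal, Matrix.trace_diagonal, sq, hlam]
  -- trace of A^2 equals 2m
  have htr2 : (A * A).trace = 2 * G.edgeFinset.card := by
    rw [Matrix.trace]
    have : ∀ i, (A * A).diag i = (G.degree i : ℝ) := fun i =>
      G.adjMatrix_mul_self_apply_self i
    rw [Finset.sum_congr rfl fun i _ => this i]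
    rw [← Nat.cast_sum, SimpleGraph.sum_degrees_eq_twice_card_edges]
    push_cast
    ring
  have hsum_sq : ∑ i, lam i ^ 2 = 2 * G.edgeFinset.card := by rw [← htr, htr2]
  -- expand square of sum
  have hsq : (∑ i, a i) ^ 2 =
      ∑ i, a i ^ 2 + ∑ p ∈ (Finset.univ : Finset V).offDiag, a p.1 * a p.2 := by
    rw [sq, Finset.sum_mul_sum, ← Finset.sum_product', ← Finset.diag_union_offDiag,
      Finset.sum_union (Finset.disjoint_diag_offDiag _), Finset.sum_diag]
    simp [sq]
  have hP : |A.det| = ∏ i, a i := by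
    rw [hA.det_eq_prod_eigenvalues, Finset.abs_prod]
    simp [hadef, hlam]
  -- key : offdiag sum bound
  have key : (Fintype.card V : ℝ) * ((Fintype.card V : ℝ) - 1) *
      |A.det| ^ ((2 : ℝ) / (Fintype.card V : ℝ)) ≤
      ∑ p ∈ (Finset.univ : Finset V).offDiag, a p.1 * a p.2 := by
    have hsum_nn : (0:ℝ) ≤ ∑ p ∈ (Finset.univ : Finset V).offDiag, a p.1 * a p.2 :=
      Finset.sum_nonneg fun p _ => mul_nonneg (ha _) (ha _)
    by_cases hdet : A.det = 0
    · rw [hdet, abs_zero, Real.zero_rpow (by positivity : (2:ℝ)/(Fintype.card V) ≠ 0),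
        mul_zero]
      exact hsum_nn
    by_cases h1 : Fintype.card V = 1
    · rw [h1]
      norm_num
      exact hsum_nn
    have hn2 : 2 ≤ Fintype.card V := by omega
    set N := (Finset.univ : Finset V).offDiag.card with hNdef
    have hNcard : N = Fintype.card V * Fintype.card V - Fintype.card V := by
      rw [hNdef, Finset.offDiag_card, Finset.card_univ]
    have hNpos : 0 < N := by
      rw [hNcard]
      exact Nat.sub_pos_of_lt ((lt_mul_iff_one_lt_left hn).mpr (by omega))
    have hNR : (N : ℝ) = (Fintype.card V : ℝ) * ((Fintype.card V : ℝ) - 1) := by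
      rw [hNcard]
      push_cast [Nat.cast_sub (Nat.le_mul_of_pos_left _ hn)]
      ring
    have hPpos : 0 < ∏ i, a i := by
      rw [← hP]; exact abs_pos.mpr hdet
    have hPne : (∏ i, a i) ≠ 0 := ne_of_gt hPpos
    -- product over offDiag
    have hbig : ∏ p ∈ ((Finset.univ : Finset V) ×ˢ Finset.univ), a p.1 * a p.2 =
        (∏ i, a i) ^ (2 * Fintype.card V) := by
      rw [Finset.prod_product]
      simp only [Finset.prod_mul_distrib, Finset.prod_const, Finset.prod_pow,
        Finset.card_univ]
      rw [two_mul, pow_add]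
    have hdiag : ∏ p ∈ (Finset.univ : Finset V).diag, a p.1 * a p.2 =
        (∏ i, a i) ^ 2 := by
      rw [Finset.prod_diag]
      rw [Finset.prod_mul_distrib, sq]
    have hsplit : (∏ p ∈ (Finset.univ : Finset V).diag, a p.1 * a p.2) *
        (∏ p ∈ (Finset.univ : Finset V).offDiag, a p.1 * a p.2) =
        (∏ i, a i) ^ (2 * Fintype.card V) := by
      rw [← Finset.prod_union (Finset.disjoint_diag_offDiag _),
        Finset.diag_union_offDiag, hbig]
    rw [hdiag] at hsplit
    have hoff : ∏ p ∈ (Finset.univ : Finset V).offDiag, a p.1 * a p.2 =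
        (∏ i, a i) ^ (2 * Fintype.card V - 2) := by
      apply mul_left_cancel₀ (pow_ne_zero 2 hPne)
      rw [hsplit, ← pow_add]
      congr 1
      omega
    have amgm := Real.geom_mean_le_arith_mean_weighted (Finset.univ.offDiag)
      (fun _ => (N:ℝ)⁻¹) (fun p : V × V => a p.1 * a p.2)
      (fun i _ => by positivity)
      (by
        rw [Finset.sum_const, nsmul_eq_mul, ← hNdef]
        field_simp)
      (fun p _ => mul_nonneg (ha _) (ha _))
    rw [Real.finset_prod_rpow _ _ (fun p _ => mul_nonneg (ha _) (ha _)) _, hoff,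
      ← Real.rpow_natCast _ (2 * Fintype.card V - 2), ← Real.rpow_mul hPpos.le] at amgm
    have hexp : ((2 * Fintype.card V - 2 : ℕ) : ℝ) * (N:ℝ)⁻¹ =
        (2:ℝ) / (Fintype.card V : ℝ) := by
      have h2n : ((2 * Fintype.card V - 2 : ℕ) : ℝ) = 2 * (Fintype.card V : ℝ) - 2 := by
        push_cast [Nat.cast_sub (by omega : 2 ≤ 2 * Fintype.card V)]
        ring
      have hc : (Fintype.card V : ℝ) ≠ 0 := Nat.cast_ne_zero.mpr (by omega)
      have hc1 : (Fintype.card V : ℝ) - 1 ≠ 0 := by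
        have : (2:ℝ) ≤ (Fintype.card V : ℝ) := by exact_mod_cast hn2
        linarith
      rw [h2n, hNR]
      field_simp
    rw [hexp, ← Finset.mul_sum] at amgm
    rw [hP, ← hNR]
    have hNRpos : (0:ℝ) < (N:ℝ) := by exact_mod_cast hNpos
    calc (N:ℝ) * (∏ i, a i) ^ ((2:ℝ) / (Fintype.card V : ℝ))
        ≤ (N:ℝ) * ((N:ℝ)⁻¹ * ∑ p ∈ (Finset.univ : Finset V).offDiag, a p.1 * a p.2) :=
          mul_le_mul_of_nonneg_left amgm hNRpos.le
      _ = ∑ p ∈ (Finset.univ : Finset V).offDiag, a p.1 * a p.2 := by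
          rw [← mul_assoc, mul_inv_cancel₀ (ne_of_gt hNRpos), one_mul]
  have habs : ∀ i, a i ^ 2 = lam i ^ 2 := fun i => sq_abs _
  have hfinal : 2 * (G.edgeFinset.card : ℝ) +
      (Fintype.card V : ℝ) * ((Fintype.card V : ℝ) - 1) *
        |A.det| ^ ((2 : ℝ) / (Fintype.card V : ℝ)) ≤ (∑ i, a i) ^ 2 := by
    rw [hsq, Finset.sum_congr rfl fun i _ => habs i, hsum_sq]
    linarith [key]
  have := Real.sqrt_le_sqrt hfinal
  rwa [Real.sqrt_sq (Finset.sum_nonneg fun i _ => ha i)] at this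
end

section
/- Let x, y ∈ ℝⁿ with averages A(x) = (1/n)Σxᵢ and A(y) = (1/n)Σyᵢ. Suppose φ ≤ xᵢ ≤ Φ and γ ≤ yᵢ ≤ Γ for all i. Then |(1/n)Σxᵢyᵢ − A(x)A(y)| ≤ √((Φ−A(x))(A(x)−φ)(Γ−A(y))(A(y)−γ)). -/
theorem discrete_gruss_strong (n : ℕ) (hn : 0 < n) (x y : Fin n → ℝ)
    (φ Φ γ Γ : ℝ)
    (hx : ∀ i, φ ≤ x i ∧ x i ≤ Φ) (hy : ∀ i, γ ≤ y i ∧ y i ≤ Γ) :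
    |(1 / n : ℝ) * ∑ i, x i * y i -
        ((1 / n : ℝ) * ∑ i, x i) * ((1 / n : ℝ) * ∑ i, y i)| ≤
      Real.sqrt ((Φ - (1 / n : ℝ) * ∑ i, x i) * ((1 / n : ℝ) * ∑ i, x i - φ) *
        (Γ - (1 / n : ℝ) * ∑ i, y i) * ((1 / n : ℝ) * ∑ i, y i - γ)) := by
  have hN : (0:ℝ) < (n:ℝ) := by exact_mod_cast hn
  set N : ℝ := (n:ℝ) with hNdef
  set A : ℝ := (1/N) * ∑ i, x i with hA
  set B : ℝ := (1/N) * ∑ i, y i with hB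
  have hSX : ∑ i, x i = N * A := by rw [hA]; field_simp
  have hSY : ∑ i, y i = N * B := by rw [hB]; field_simp
  -- representation of the covariance
  have hCrep : (1/N) * ∑ i, x i * y i - A * B
      = (1/N) * ∑ i, (x i - A) * (y i - B) := by
    have h1 : ∀ i, (x i - A) * (y i - B)
        = x i * y i - A * y i - B * x i + A * B := fun i => by ring
    simp_rw [h1]
    rw [Finset.sum_add_distrib, Finset.sum_sub_distrib, Finset.sum_sub_distrib,
      ← Finset.mul_sum, ← Finset.mul_sum, Finset.sum_const, Finset.card_univ,
      Fintype.card_fin, nsmul_eq_mul, hSX, hSY]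
    field_simp
    ring
  -- variance bounds
  have varbound : ∀ (z : Fin n → ℝ) (a b : ℝ), (∀ i, a ≤ z i ∧ z i ≤ b) →
      ∑ i, (z i - (1/N) * ∑ j, z j)^2
        ≤ N * ((b - (1/N) * ∑ j, z j) * ((1/N) * ∑ j, z j - a)) := by
    intro z a b hz
    set M : ℝ := (1/N) * ∑ j, z j with hM
    have hSZ : ∑ j, z j = N * M := by rw [hM]; field_simp
    have hpos : 0 ≤ ∑ i, (b - z i) * (z i - a) :=
      Finset.sum_nonneg fun i _ =>
        mul_nonneg (by linarith [(hz i).2]) (by linarith [(hz i).1])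
    have hid : ∑ i, (z i - M)^2 + ∑ i, (b - z i) * (z i - a)
        = N * ((b - M) * (M - a)) := by
      rw [← Finset.sum_add_distrib]
      have h2 : ∀ i, (z i - M)^2 + (b - z i) * (z i - a)
          = (b + a - 2*M) * z i + (M^2 - b*a) := fun i => by ring
      simp_rw [h2]
      rw [Finset.sum_add_distrib, ← Finset.mul_sum, hSZ, Finset.sum_const,
        Finset.card_univ, Fintype.card_fin, nsmul_eq_mul, ← hNdef]
      ring
    linarith
  have hVxb := varbound x φ Φ hx
  have hVyb := varbound y γ Γ hy
  rw [← hA] at hVxb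
  rw [← hB] at hVyb
  have hVx0 : (0:ℝ) ≤ ∑ i, (x i - A)^2 :=
    Finset.sum_nonneg fun i _ => sq_nonneg _
  have hVy0 : (0:ℝ) ≤ ∑ i, (y i - B)^2 :=
    Finset.sum_nonneg fun i _ => sq_nonneg _
  have hcs := Finset.sum_mul_sq_le_sq_mul_sq Finset.univ
    (fun i => x i - A) (fun i => y i - B)
  -- square of LHS bounded by RHS argument
  have hsq : ((1/N) * ∑ i, x i * y i - A * B)^2
      ≤ (Φ - A) * (A - φ) * (Γ - B) * (B - γ) := by
    rw [hCrep, mul_pow]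
    have step1 : (1/N)^2 * (∑ i, (x i - A) * (y i - B))^2
        ≤ (1/N)^2 * ((∑ i, (x i - A)^2) * ∑ i, (y i - B)^2) :=
      mul_le_mul_of_nonneg_left hcs (by positivity)
    have step2 : (∑ i, (x i - A)^2) * ∑ i, (y i - B)^2
        ≤ (N * ((Φ - A) * (A - φ))) * (N * ((Γ - B) * (B - γ))) :=
      mul_le_mul hVxb hVyb hVy0 (le_trans hVx0 hVxb)
    have step3 : (1/N)^2 * ((∑ i, (x i - A)^2) * ∑ i, (y i - B)^2)
        ≤ (1/N)^2 * ((N * ((Φ - A) * (A - φ))) * (N * ((Γ - B) * (B - γ)))) :=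
      mul_le_mul_of_nonneg_left step2 (by positivity)
    have heq : (1/N)^2 * ((N * ((Φ - A) * (A - φ))) * (N * ((Γ - B) * (B - γ))))
        = (Φ - A) * (A - φ) * (Γ - B) * (B - γ) := by
      field_simp
    linarith
  calc |(1/N) * ∑ i, x i * y i - A * B|
      = Real.sqrt (((1/N) * ∑ i, x i * y i - A * B)^2) := (Real.sqrt_sq_eq_abs _).symm
    _ ≤ Real.sqrt ((Φ - A) * (A - φ) * (Γ - B) * (B - γ)) := Real.sqrt_le_sqrt hsq
end

section
/- Let x, y ∈ ℝⁿ with φ ≤ xᵢ ≤ Φ and γ ≤ yᵢ ≤ Γ for all i. Then |(1/n)Σxᵢyᵢ − (1/n²)(Σxᵢ)(Σyᵢ)| ≤ (1/4)(Φ−φ)(Γ−γ). -/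
theorem discrete_gruss (n : ℕ) (hn : 0 < n) (x y : Fin n → ℝ)
    (φ Φ γ Γ : ℝ)
    (hx : ∀ i, φ ≤ x i ∧ x i ≤ Φ) (hy : ∀ i, γ ≤ y i ∧ y i ≤ Γ) :
    |(1 / n : ℝ) * ∑ i, x i * y i -
        (1 / (n : ℝ) ^ 2) * (∑ i, x i) * (∑ i, y i)| ≤
      (1 / 4) * (Φ - φ) * (Γ - γ) := by
  have hn' : (0:ℝ) < n := by exact_mod_cast hn
  set A := ∑ i, x i with hA
  set B := ∑ i, y i with hB
  set u : Fin n → ℝ := fun i => x i - A / n with hu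
  set v : Fin n → ℝ := fun i => y i - B / n with hv
  have card : (Finset.univ : Finset (Fin n)).card = n := by simp
  have hsum : ∑ i, u i * v i = ∑ i, x i * y i - A * B / n := by
    have h1 : ∀ i ∈ Finset.univ, u i * v i
        = x i * y i - (B/n) * x i - (A/n) * y i + (A/n)*(B/n) := by
      intro i _; simp only [hu, hv]; ring
    rw [Finset.sum_congr rfl h1]
    simp only [Finset.sum_add_distrib, Finset.sum_sub_distrib, ← Finset.mul_sum, ← hA, ← hB,
      Finset.sum_const, card, nsmul_eq_mul]
    field_simp
    ring
  have husq : ∑ i, u i ^ 2 = ∑ i, x i ^ 2 - A ^ 2 / n := by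
    have h1 : ∀ i ∈ Finset.univ, u i ^ 2
        = x i ^ 2 - 2 * (A/n) * x i + (A/n)^2 := by
      intro i _; simp only [hu]; ring
    rw [Finset.sum_congr rfl h1]
    simp only [Finset.sum_add_distrib, Finset.sum_sub_distrib, ← Finset.mul_sum, ← hA,
      Finset.sum_const, card, nsmul_eq_mul]
    field_simp
    ring
  have hvsq : ∑ i, v i ^ 2 = ∑ i, y i ^ 2 - B ^ 2 / n := by
    have h1 : ∀ i ∈ Finset.univ, v i ^ 2
        = y i ^ 2 - 2 * (B/n) * y i + (B/n)^2 := by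
      intro i _; simp only [hv]; ring
    rw [Finset.sum_congr rfl h1]
    simp only [Finset.sum_add_distrib, Finset.sum_sub_distrib, ← Finset.mul_sum, ← hB,
      Finset.sum_const, card, nsmul_eq_mul]
    field_simp
    ring
  -- pointwise quadratic bounds
  have hxsq : ∑ i, x i ^ 2 ≤ (Φ + φ) * A - n * (Φ * φ) := by
    have : ∑ i, x i ^ 2 ≤ ∑ i, ((Φ + φ) * x i - Φ * φ) := by
      apply Finset.sum_le_sum
      intro i _
      nlinarith [(hx i).1, (hx i).2]
    calc ∑ i, x i ^ 2 ≤ ∑ i, ((Φ + φ) * x i - Φ * φ) := this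
      _ = (Φ + φ) * A - n * (Φ * φ) := by
          simp [Finset.sum_sub_distrib, ← Finset.mul_sum, ← hA, Finset.sum_const, card]
  have hysq : ∑ i, y i ^ 2 ≤ (Γ + γ) * B - n * (Γ * γ) := by
    have : ∑ i, y i ^ 2 ≤ ∑ i, ((Γ + γ) * y i - Γ * γ) := by
      apply Finset.sum_le_sum
      intro i _
      nlinarith [(hy i).1, (hy i).2]
    calc ∑ i, y i ^ 2 ≤ ∑ i, ((Γ + γ) * y i - Γ * γ) := this
      _ = (Γ + γ) * B - n * (Γ * γ) := by
          simp [Finset.sum_sub_distrib, ← Finset.mul_sum, ← hB, Finset.sum_const, card]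
  have genkey : ∀ a b m : ℝ, (a + b) * (m * n) - n * (a * b) - (m * n)^2 / n ≤ (n:ℝ) * ((a - b)/2)^2 := by
    intro a b m
    have h0 : (m * (n:ℝ))^2 / n = m^2 * n := by field_simp
    rw [h0]
    nlinarith [sq_nonneg (m - (a + b)/2), hn']
  have hAm : A = (A / (n:ℝ)) * n := by field_simp
  have hBm : B = (B / (n:ℝ)) * n := by field_simp
  have hU : ∑ i, u i ^ 2 ≤ (n:ℝ) * ((Φ - φ)/2)^2 := by
    rw [husq]
    have key := genkey Φ φ (A / n)
    rw [← hAm] at key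
    linarith
  have hV : ∑ i, v i ^ 2 ≤ (n:ℝ) * ((Γ - γ)/2)^2 := by
    rw [hvsq]
    have key := genkey Γ γ (B / n)
    rw [← hBm] at key
    linarith
  have hUnn : (0:ℝ) ≤ ∑ i, u i ^ 2 := Finset.sum_nonneg fun i _ => sq_nonneg _
  have hVnn : (0:ℝ) ≤ ∑ i, v i ^ 2 := Finset.sum_nonneg fun i _ => sq_nonneg _
  have hCS := Finset.sum_mul_sq_le_sq_mul_sq Finset.univ u v
  have hT : (1 / n : ℝ) * ∑ i, x i * y i - (1 / (n : ℝ) ^ 2) * A * B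
      = (1/n) * ∑ i, u i * v i := by
    rw [hsum]; field_simp
  have hΦφ : φ ≤ Φ := le_trans (hx ⟨0, hn⟩).1 (hx ⟨0, hn⟩).2
  have hΓγ : γ ≤ Γ := le_trans (hy ⟨0, hn⟩).1 (hy ⟨0, hn⟩).2
  have hc : (0:ℝ) ≤ (1 / 4) * (Φ - φ) * (Γ - γ) :=
    mul_nonneg (mul_nonneg (by norm_num) (by linarith)) (by linarith)
  rw [hT, abs_le]
  have hsq : ((1/n:ℝ) * ∑ i, u i * v i)^2 ≤ ((1 / 4) * (Φ - φ) * (Γ - γ))^2 := by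
    have h1 : ((1/n:ℝ) * ∑ i, u i * v i)^2 = (1/n^2) * (∑ i, u i * v i)^2 := by ring
    have h2 : (∑ i, u i * v i)^2 ≤ ((n:ℝ) * ((Φ - φ)/2)^2) * ((n:ℝ) * ((Γ - γ)/2)^2) := by
      calc (∑ i, u i * v i)^2 ≤ (∑ i, u i ^ 2) * ∑ i, v i ^ 2 := hCS
        _ ≤ ((n:ℝ) * ((Φ - φ)/2)^2) * ((n:ℝ) * ((Γ - γ)/2)^2) :=
            mul_le_mul hU hV hVnn (by positivity)
    rw [h1]
    have h3 : (1/(n:ℝ)^2) * (((n:ℝ) * ((Φ - φ)/2)^2) * ((n:ℝ) * ((Γ - γ)/2)^2))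
        = ((1 / 4) * (Φ - φ) * (Γ - γ))^2 := by field_simp; ring
    calc (1/(n:ℝ)^2) * (∑ i, u i * v i)^2
        ≤ (1/(n:ℝ)^2) * (((n:ℝ) * ((Φ - φ)/2)^2) * ((n:ℝ) * ((Γ - γ)/2)^2)) := by
          apply mul_le_mul_of_nonneg_left h2; positivity
      _ = ((1 / 4) * (Φ - φ) * (Γ - γ))^2 := h3
  exact abs_le_of_sq_le_sq' hsq hc
end

section
/- Let (X, ⟨·,·⟩) be a real inner product space, e ∈ X with ‖e‖ = 1, and x, y ∈ X with reals φ, Φ, γ, Γ such that ⟨Φe − x, x − φe⟩ ≥ 0 and ⟨Γe − y, y − γe⟩ ≥ 0. Then |⟨x,y⟩ − ⟨x,e⟩⟨y,e⟩| ≤ (1/4)|Φ−φ||Γ−γ|. -/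
open RealInnerProductSpace

theorem abstract_gruss {X : Type*} [NormedAddCommGroup X] [InnerProductSpace ℝ X]
    (e : X) (he : ‖e‖ = 1) (x y : X) (φ Φ γ Γ : ℝ)
    (hx : 0 ≤ ⟪Φ • e - x, x - φ • e⟫) (hy : 0 ≤ ⟪Γ • e - y, y - γ • e⟫) :
    |⟪x, y⟫ - ⟪x, e⟫ * ⟪y, e⟫| ≤ (1 / 4) * |Φ - φ| * |Γ - γ| := by
  have hee : ⟪e, e⟫ = (1 : ℝ) := by
    rw [real_inner_self_eq_norm_sq, he]; norm_num
  set x' := x - ⟪x, e⟫ • e with hx'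
  set y' := y - ⟪y, e⟫ • e with hy'
  have hT : ⟪x', y'⟫ = ⟪x, y⟫ - ⟪x, e⟫ * ⟪y, e⟫ := by
    simp only [hx', hy', inner_sub_left, inner_sub_right, real_inner_smul_left,
      real_inner_smul_right, hee, real_inner_comm y e]
    ring
  have hxx : ⟪x', x'⟫ = ⟪x, x⟫ - ⟪x, e⟫ * ⟪x, e⟫ := by
    simp only [hx', inner_sub_left, inner_sub_right, real_inner_smul_left,
      real_inner_smul_right, hee, real_inner_comm x e]
    ring
  have hyy : ⟪y', y'⟫ = ⟪y, y⟫ - ⟪y, e⟫ * ⟪y, e⟫ := by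
    simp only [hy', inner_sub_left, inner_sub_right, real_inner_smul_left,
      real_inner_smul_right, hee, real_inner_comm y e]
    ring
  have hxexp : ⟪Φ • e - x, x - φ • e⟫
      = Φ * ⟪x, e⟫ - Φ * φ - ⟪x, x⟫ + φ * ⟪x, e⟫ := by
    simp only [inner_sub_left, inner_sub_right, real_inner_smul_left,
      real_inner_smul_right, hee, real_inner_comm x e]
    ring
  have hyexp : ⟪Γ • e - y, y - γ • e⟫
      = Γ * ⟪y, e⟫ - Γ * γ - ⟪y, y⟫ + γ * ⟪y, e⟫ := by
    simp only [inner_sub_left, inner_sub_right, real_inner_smul_left,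
      real_inner_smul_right, hee, real_inner_comm y e]
    ring
  have hnx : ‖x'‖ ^ 2 = ⟪x', x'⟫ := (real_inner_self_eq_norm_sq x').symm
  have hny : ‖y'‖ ^ 2 = ⟪y', y'⟫ := (real_inner_self_eq_norm_sq y').symm
  have hbx : ‖x'‖ ≤ (1 / 2) * |Φ - φ| := by
    have h1 : ‖x'‖ ^ 2 ≤ ((1 / 2) * |Φ - φ|) ^ 2 := by
      rw [hnx, hxx]
      rw [hxexp] at hx
      nlinarith [sq_nonneg (Φ - φ), sq_abs (Φ - φ), sq_nonneg (Φ + φ - 2 * ⟪x, e⟫)]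
    have h2 := Real.sqrt_le_sqrt h1
    rwa [Real.sqrt_sq (norm_nonneg _), Real.sqrt_sq (by positivity)] at h2
  have hby : ‖y'‖ ≤ (1 / 2) * |Γ - γ| := by
    have h1 : ‖y'‖ ^ 2 ≤ ((1 / 2) * |Γ - γ|) ^ 2 := by
      rw [hny, hyy]
      rw [hyexp] at hy
      nlinarith [sq_nonneg (Γ - γ), sq_abs (Γ - γ), sq_nonneg (Γ + γ - 2 * ⟪y, e⟫)]
    have h2 := Real.sqrt_le_sqrt h1
    rwa [Real.sqrt_sq (norm_nonneg _), Real.sqrt_sq (by positivity)] at h2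
  have hcs := abs_real_inner_le_norm x' y'
  rw [hT] at hcs
  calc |⟪x, y⟫ - ⟪x, e⟫ * ⟪y, e⟫| ≤ ‖x'‖ * ‖y'‖ := hcs
    _ ≤ ((1 / 2) * |Φ - φ|) * ((1 / 2) * |Γ - γ|) := by
        apply mul_le_mul hbx hby (norm_nonneg y')
        positivity
    _ = (1 / 4) * |Φ - φ| * |Γ - γ| := by ring
end

section
/- Let (X, ⟨·,·⟩) be a real inner product space, e ∈ X with ‖e‖ = 1, and x, y ∈ X with reals φ, Φ, γ, Γ such that ⟨Φe − x, x − φe⟩ ≥ 0 and ⟨Γe − y, y − γe⟩ ≥ 0. Set A(x) = ⟨x,e⟩, A(y) = ⟨y,e⟩. Then |⟨x,y⟩ − A(x)A(y)| ≤ √((Φ−A(x))(A(x)−φ)(Γ−A(y))(A(y)−γ)). -/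
open RealInnerProductSpace

theorem abstract_gruss_strong {X : Type*} [NormedAddCommGroup X] [InnerProductSpace ℝ X]
    (e : X) (he : ‖e‖ = 1) (x y : X) (φ Φ γ Γ : ℝ)
    (hx : 0 ≤ ⟪Φ • e - x, x - φ • e⟫) (hy : 0 ≤ ⟪Γ • e - y, y - γ • e⟫) :
    |⟪x, y⟫ - ⟪x, e⟫ * ⟪y, e⟫| ≤
      Real.sqrt ((Φ - ⟪x, e⟫) * (⟪x, e⟫ - φ) * (Γ - ⟪y, e⟫) * (⟪y, e⟫ - γ)) := by
  have hee : ⟪e, e⟫ = 1 := by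
    rw [real_inner_self_eq_norm_sq, he]; norm_num
  set a := ⟪x, e⟫ with ha
  set b := ⟪y, e⟫ with hb
  set px := x - a • e with hpx
  set py := y - b • e with hpy
  have hinner : ⟪px, py⟫ = ⟪x, y⟫ - a * b := by
    simp only [hpx, hpy, inner_sub_left, inner_sub_right, real_inner_smul_left,
      real_inner_smul_right, hee]
    rw [real_inner_comm y e, ← hb, ← ha]
    ring
  have hxx : ⟪px, px⟫ ≤ (Φ - a) * (a - φ) := by
    have hx' : ⟪Φ • e - x, x - φ • e⟫ =
        (Φ - a) * (a - φ) - ⟪px, px⟫ := by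
      simp only [hpx, inner_sub_left, inner_sub_right, real_inner_smul_left,
        real_inner_smul_right, hee]
      rw [real_inner_comm x e, ← ha]
      ring
    linarith [hx, hx'.symm]
  have hyy : ⟪py, py⟫ ≤ (Γ - b) * (b - γ) := by
    have hy' : ⟪Γ • e - y, y - γ • e⟫ =
        (Γ - b) * (b - γ) - ⟪py, py⟫ := by
      simp only [hpy, inner_sub_left, inner_sub_right, real_inner_smul_left,
        real_inner_smul_right, hee]
      rw [real_inner_comm y e, ← hb]
      ring
    linarith [hy, hy'.symm]
  have hcs : |⟪px, py⟫| ≤ ‖px‖ * ‖py‖ := abs_real_inner_le_norm px py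
  have hnx : ‖px‖ = Real.sqrt ⟪px, px⟫ := by
    rw [show ⟪px, px⟫ = ‖px‖ ^ 2 by rw [sq, real_inner_self_eq_norm_mul_norm],
      Real.sqrt_sq (norm_nonneg _)]
  have hny : ‖py‖ = Real.sqrt ⟪py, py⟫ := by
    rw [show ⟪py, py⟫ = ‖py‖ ^ 2 by rw [sq, real_inner_self_eq_norm_mul_norm],
      Real.sqrt_sq (norm_nonneg _)]
  calc |⟪x, y⟫ - a * b| = |⟪px, py⟫| := by rw [hinner]
    _ ≤ ‖px‖ * ‖py‖ := hcs
    _ ≤ Real.sqrt ((Φ - a) * (a - φ)) * Real.sqrt ((Γ - b) * (b - γ)) := by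
        rw [hnx, hny]
        exact mul_le_mul (Real.sqrt_le_sqrt hxx) (Real.sqrt_le_sqrt hyy)
          (Real.sqrt_nonneg _) (Real.sqrt_nonneg _)
    _ = Real.sqrt ((Φ - a) * (a - φ) * (Γ - b) * (b - γ)) := by
        rw [← Real.sqrt_mul (by nlinarith [real_inner_self_nonneg (x := px)])]
        congr 1; ring
end

section
/- Let G be a graph with n vertices, m edges, energy E, eigenvalues λ₁ ≥ ... ≥ λₙ, and t = min|λᵢ|. Then P := Σ_{i≠j}|λᵢ||λⱼ| satisfies P ≥ E² + nλ₁t − (λ₁ + t)E. -/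
/-!
Every |λᵢ| lies in [t, λ₁]. The upper bound holds because the adjacency matrix is entrywise
nonnegative: for a unit eigenvector v of λⱼ, |λⱼ| = |vᵀAv| ≤ |v|ᵀA|v| ≤ λ₁. Summing
(|λᵢ| - t)(|λᵢ| - λ₁) ≤ 0 over i gives Σ|λᵢ|² + nλ₁t ≤ (λ₁ + t)E, and P = E² - Σ|λᵢ|².
-/

open Matrix Finset
open scoped MatrixOrder

theorem Finset.sum_offDiag_mul_eq {ι R : Type*} [DecidableEq ι] [CommRing R] (s : Finset ι)
    (f : ι → R) :
    ∑ p ∈ s.offDiag, f p.1 * f p.2 = (∑ i ∈ s, f i) ^ 2 - ∑ i ∈ s, f i ^ 2 := by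
  rw [eq_sub_iff_add_eq, sq, sum_mul_sum, ← sum_product', ← diag_union_offDiag,
    sum_union (disjoint_diag_offDiag s), sum_diag, add_comm]
  simp only [sq]

theorem Finset.sum_sq_add_card_mul_le {ι R : Type*} [CommRing R] [LinearOrder R]
    [IsStrictOrderedRing R] {s : Finset ι} {x : ι → R} {a b : R}
    (h : ∀ i ∈ s, a ≤ x i ∧ x i ≤ b) :
    ∑ i ∈ s, x i ^ 2 + #s * (a * b) ≤ (a + b) * ∑ i ∈ s, x i := by
  have hterm : ∀ i ∈ s, x i ^ 2 + a * b ≤ (a + b) * x i := fun i hi => by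
    nlinarith [mul_nonpos_of_nonneg_of_nonpos (sub_nonneg.2 (h i hi).1) (sub_nonpos.2 (h i hi).2)]
  calc ∑ i ∈ s, x i ^ 2 + #s * (a * b) = ∑ i ∈ s, (x i ^ 2 + a * b) := by
        rw [sum_add_distrib, sum_const, nsmul_eq_mul]
    _ ≤ ∑ i ∈ s, (a + b) * x i := sum_le_sum hterm
    _ = (a + b) * ∑ i ∈ s, x i := (mul_sum _ _ _).symm

theorem Matrix.abs_dotProduct_mulVec_le {m n : Type*} [Fintype m] [Fintype n]
    {A : Matrix m n ℝ} (hA : ∀ i j, 0 ≤ A i j) (v : m → ℝ) (w : n → ℝ) :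
    |v ⬝ᵥ A *ᵥ w| ≤ |v| ⬝ᵥ A *ᵥ |w| := by
  have hmulVec : ∀ i, |(A *ᵥ w) i| ≤ (A *ᵥ |w|) i := fun i =>
    (abs_sum_le_sum_abs _ _).trans_eq <| sum_congr rfl fun j _ => by
      rw [abs_mul, abs_of_nonneg (hA i j), Pi.abs_apply]
  refine (abs_sum_le_sum_abs _ _).trans <| sum_le_sum fun i _ => ?_
  rw [abs_mul, Pi.abs_apply]
  exact mul_le_mul_of_nonneg_left (hmulVec i) (abs_nonneg _)

namespace Matrix.IsHermitian

variable {n : Type*} [Fintype n] [DecidableEq n] {A : Matrix n n ℝ} (hA : A.IsHermitian)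
include hA

theorem dotProduct_mulVec_le_iSup_eigenvalues_mul (w : n → ℝ) :
    w ⬝ᵥ A *ᵥ w ≤ (⨆ i, hA.eigenvalues i) * (w ⬝ᵥ w) := by
  have hle : A ≤ algebraMap ℝ _ (⨆ i, hA.eigenvalues i) := by
    refine le_algebraMap_of_spectrum_le (fun x hx => ?_) hA
    obtain ⟨i, rfl⟩ := hA.spectrum_real_eq_range_eigenvalues ▸ hx
    exact le_ciSup (Set.finite_range _).bddAbove i
  have hpsd := (le_iff.mp hle).dotProduct_mulVec_nonneg w
  rw [sub_mulVec, dotProduct_sub, Algebra.algebraMap_eq_smul_one, smul_mulVec, one_mulVec,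
    dotProduct_smul, star_trivial, smul_eq_mul] at hpsd
  linarith

theorem abs_eigenvalues_le_iSup_eigenvalues (hA₀ : ∀ i j, 0 ≤ A i j) (j : n) :
    |hA.eigenvalues j| ≤ ⨆ i, hA.eigenvalues i := by
  set v : n → ℝ := ⇑(hA.eigenvectorBasis j)
  have hv : v ⬝ᵥ v = 1 := by
    have := hA.eigenvectorBasis.orthonormal.1 j
    rw [EuclideanSpace.norm_eq] at this
    simpa [dotProduct, v, ← sq] using this
  have heig : hA.eigenvalues j = v ⬝ᵥ A *ᵥ v := by
    simpa using hA.eigenvalues_eq j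
  calc |hA.eigenvalues j| = |v ⬝ᵥ A *ᵥ v| := by rw [heig]
    _ ≤ |v| ⬝ᵥ A *ᵥ |v| := abs_dotProduct_mulVec_le hA₀ v v
    _ ≤ (⨆ i, hA.eigenvalues i) * (|v| ⬝ᵥ |v|) := hA.dotProduct_mulVec_le_iSup_eigenvalues_mul _
    _ = ⨆ i, hA.eigenvalues i := by
        rw [show |v| ⬝ᵥ |v| = v ⬝ᵥ v by simp only [dotProduct, Pi.abs_apply, abs_mul_abs_self],
          hv, mul_one]

end Matrix.IsHermitian

theorem key_intermediate_P_bound_general {V : Type*} [Fintype V] [DecidableEq V]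
    (G : SimpleGraph V) [DecidableRel G.Adj]
    (hA : (G.adjMatrix ℝ).IsHermitian) :
    (∑ p ∈ Finset.univ.offDiag, |hA.eigenvalues p.1| * |hA.eigenvalues p.2|) ≥
      (∑ i, |hA.eigenvalues i|) ^ 2 +
        (Fintype.card V : ℝ) * (⨆ i, hA.eigenvalues i) * (⨅ i, |hA.eigenvalues i|) -
        ((⨆ i, hA.eigenvalues i) + (⨅ i, |hA.eigenvalues i|)) *
          (∑ i, |hA.eigenvalues i|) := by
  have hadj₀ : ∀ i j, 0 ≤ G.adjMatrix ℝ i j := fun i j => by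
    rw [SimpleGraph.adjMatrix_apply]; split_ifs <;> norm_num
  have hbounds := sum_sq_add_card_mul_le (s := univ) (x := fun i => |hA.eigenvalues i|)
    (a := ⨅ i, |hA.eigenvalues i|) (b := ⨆ i, hA.eigenvalues i) fun i _ =>
      ⟨ciInf_le (Set.finite_range _).bddBelow i, hA.abs_eigenvalues_le_iSup_eigenvalues hadj₀ i⟩
  have hP : ∑ p ∈ univ.offDiag, |hA.eigenvalues p.1| * |hA.eigenvalues p.2| =
      (∑ i, |hA.eigenvalues i|) ^ 2 - ∑ i, |hA.eigenvalues i| ^ 2 :=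
    sum_offDiag_mul_eq univ fun i => |hA.eigenvalues i|
  rw [card_univ] at hbounds
  linarith

theorem key_intermediate_P_bound {V : Type*} [Fintype V] [DecidableEq V] [Nonempty V]
    (G : SimpleGraph V) [DecidableRel G.Adj]
    (hA : (G.adjMatrix ℝ).IsHermitian) :
    (∑ p ∈ Finset.univ.offDiag, |hA.eigenvalues p.1| * |hA.eigenvalues p.2|) ≥
      (∑ i, |hA.eigenvalues i|) ^ 2 +
        (Fintype.card V : ℝ) * (⨆ i, hA.eigenvalues i) * (⨅ i, |hA.eigenvalues i|) -
        ((⨆ i, hA.eigenvalues i) + (⨅ i, |hA.eigenvalues i|)) *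
          (∑ i, |hA.eigenvalues i|) :=
  key_intermediate_P_bound_general G hA
end
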